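/- Let γ be a k-uniform morphism on a finite alphabet A with k ≥ 2, whose iterative fixed point beginning with a₀ exists and is not ultimately periodic. Then there exist (not necessarily distinct) letters b, c ∈ A and a power γ^m of γ such that γ^m(bc) contains bc as a factor, with γ^m(b) = w₁ b c w₂ where w₁ and w₂ are nonempty words. -/

import Mathlib

/-- Extension of a substitution `φ : A → B*` to finite words. -/
def wordMap {A B : Type} (φ : A → List B) (w : List A) : List B := w.flatMap φ

/-- `n`-fold iteration of a morphism applied to a word. -/
def iterWord {A : Type} (φ : A → List A) (n : ℕ) (w : List A) : List A :=
  (wordMap φ)^[n] w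

/-- A morphism is `k`-uniform if every letter has image of length `k`. -/
def Uniform {A : Type} (k : ℕ) (φ : A → List A) : Prop := ∀ a, (φ a).length = k

/-- The finite word `w` is a prefix of the infinite sequence `s`. -/
def PrefixSeq {A : Type} (w : List A) (s : ℕ → A) : Prop :=
  ∀ i, i < w.length → w[i]? = some (s i)

/-- `φ` is prolongable on `a₀`: `φ(a₀) = a₀ x` with `x` nonempty and iterates of `x` never empty. -/
def Prolongable {A : Type} (φ : A → List A) (a₀ : A) : Prop :=
  ∃ x : List A, x ≠ [] ∧ φ a₀ = a₀ :: x ∧ ∀ ℓ, iterWord φ ℓ x ≠ []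

/-- `s` is the iterative fixed point of `φ` beginning with `a₀`:
`φ` is prolongable on `a₀` and every iterate `φ^n(a₀)` is a prefix of `s`
(their lengths tend to infinity thanks to prolongability, so `s` is determined). -/
def IsIterFix {A : Type} (φ : A → List A) (a₀ : A) (s : ℕ → A) : Prop :=
  Prolongable φ a₀ ∧ ∀ n, PrefixSeq (iterWord φ n [a₀]) s

/-- `s` is ultimately periodic. -/
def UltimatelyPeriodic {A : Type} (s : ℕ → A) : Prop :=
  ∃ N p : ℕ, 1 ≤ p ∧ ∀ n, N ≤ n → s (n + p) = s n

/-- The extension of `φ` to infinite sequences fixes `s`: for every `m`,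
the image of the length-`m` prefix of `s` is again a prefix of `s`. -/
def SeqFixedPoint {A : Type} (φ : A → List A) (s : ℕ → A) : Prop :=
  ∀ m, PrefixSeq (wordMap φ ((List.range m).map s)) s

/-!
Follow a chain of letters `a₀, a₁, …` in which `aᵥ₊₁` is the second letter of `δ(aᵥ)`, where
`δ = γ²` is `k²`-uniform with `k² ≥ 4`. Then `aᵥ₊ₙ₊₁` occurs in `δⁿ⁺¹(aᵥ)` with a nonempty
left context and a right context of length at least `2`, both inherited from the last step.
Since the alphabet is finite, two letters of the chain coincide, which gives `b` inside some
`δⁿ⁺¹(b) = γ²⁽ⁿ⁺¹⁾(b)` at an interior position.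
-/

open Function

section Morphism

variable {A : Type} (φ : A → List A)

theorem wordMap_append (u v : List A) : wordMap φ (u ++ v) = wordMap φ u ++ wordMap φ v :=
  List.flatMap_append

theorem wordMap_cons (a : A) (w : List A) : wordMap φ (a :: w) = φ a ++ wordMap φ w :=
  List.flatMap_cons

theorem iterWord_succ (n : ℕ) (w : List A) :
    iterWord φ (n + 1) w = wordMap φ (iterWord φ n w) :=
  iterate_succ_apply' _ _ _

theorem iterWord_nil (n : ℕ) : iterWord φ n [] = [] := by
  induction n with
  | zero => rfl
  | succ n ih => rw [iterWord_succ, ih]; rfl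

theorem iterWord_append (n : ℕ) (u v : List A) :
    iterWord φ n (u ++ v) = iterWord φ n u ++ iterWord φ n v := by
  induction n with
  | zero => rfl
  | succ n ih => simp only [iterWord_succ, ih, wordMap_append]

theorem wordMap_iterWord_singleton (n : ℕ) (w : List A) :
    wordMap (fun a => iterWord φ n [a]) w = iterWord φ n w := by
  induction w with
  | nil => exact (iterWord_nil φ n).symm
  | cons a w ih => rw [wordMap_cons, ih, ← iterWord_append, List.singleton_append]

theorem iterWord_iterWord_singleton (n j : ℕ) (w : List A) :
    iterWord (fun a => iterWord φ n [a]) j w = iterWord φ (n * j) w := by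
  induction j with
  | zero => rfl
  | succ j ih =>
    rw [iterWord_succ, ih, wordMap_iterWord_singleton, Nat.mul_succ, Nat.add_comm]
    exact (iterate_add_apply _ _ _ _).symm

variable {φ}

theorem length_wordMap {K : ℕ} (hφ : Uniform K φ) (w : List A) :
    (wordMap φ w).length = K * w.length := by
  induction w with
  | nil => rfl
  | cons a w ih => rw [wordMap_cons, List.length_append, hφ, ih, List.length_cons]; ring

theorem length_iterWord {K : ℕ} (hφ : Uniform K φ) (n : ℕ) (w : List A) :
    (iterWord φ n w).length = K ^ n * w.length := by
  induction n with
  | zero => simp [iterWord]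
  | succ n ih => rw [iterWord_succ, length_wordMap hφ, ih, pow_succ]; ring

theorem uniform_iterWord_singleton {K : ℕ} (hφ : Uniform K φ) (n : ℕ) :
    Uniform (K ^ n) (fun a => iterWord φ n [a]) := fun a => by
  rw [length_iterWord hφ, List.length_singleton, mul_one]

end Morphism

section InteriorReturn

variable {A : Type} (φ : A → List A)

def secondLetterChain (a₀ : A) : ℕ → A
  | 0 => a₀
  | v + 1 => (φ (secondLetterChain a₀ v)).getD 1 (secondLetterChain a₀ v)

variable {φ}

theorem exists_eq_append_getD_one_cons {l : List A} (hl : 4 ≤ l.length) (d : A) :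
    ∃ x y, l = x ++ l.getD 1 d :: y ∧ x ≠ [] ∧ 2 ≤ y.length :=
  match l, hl with
  | a :: b :: y, hl => ⟨[a], y, rfl, List.cons_ne_nil _ _, by simp at hl; omega⟩

theorem wordMap_eq_append_cons_of_eq_append_cons {w x y p q : List A} {a b : A}
    (hw : w = x ++ a :: y) (ha : φ a = p ++ b :: q) :
    wordMap φ w = (wordMap φ x ++ p) ++ b :: (q ++ wordMap φ y) := by
  simp only [hw, wordMap_append, wordMap_cons, ha, List.append_assoc, List.cons_append]

theorem exists_iterWord_secondLetterChain {K : ℕ} (hK : 4 ≤ K) (hφ : Uniform K φ) (a₀ : A)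
    (v n : ℕ) :
    ∃ x y, iterWord φ (n + 1) [secondLetterChain φ a₀ v] =
      x ++ secondLetterChain φ a₀ (v + n + 1) :: y ∧ x ≠ [] ∧ 2 ≤ y.length := by
  set c := secondLetterChain φ a₀
  have hstep : ∀ {w x y : List A} u, w = x ++ c u :: y →
      ∃ x' y', wordMap φ w = x' ++ c (u + 1) :: y' ∧ x' ≠ [] ∧ 2 ≤ y'.length := by
    intro w x y u hw
    obtain ⟨p, q, hpq, hp, hq⟩ := exists_eq_append_getD_one_cons (hφ (c u) ▸ hK) (c u)
    refine ⟨_, _, wordMap_eq_append_cons_of_eq_append_cons hw hpq, ?_, ?_⟩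
    · exact List.append_ne_nil_of_right_ne_nil _ hp
    · rw [List.length_append]; omega
  induction n with
  | zero => exact hstep v (x := []) (y := []) rfl
  | succ n ih =>
    obtain ⟨x, y, hxy, -⟩ := ih
    rw [iterWord_succ]
    exact hstep _ hxy

theorem exists_iterWord_eq_append_pair_append [Finite A] {K : ℕ} (hK : 4 ≤ K)
    (hφ : Uniform K φ) (a₀ : A) :
    ∃ (b c : A) (n : ℕ) (w₁ w₂ : List A), 1 ≤ n ∧ w₁ ≠ [] ∧ w₂ ≠ [] ∧
      iterWord φ n [b] = w₁ ++ [b, c] ++ w₂ := by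
  obtain ⟨u, v, huv, hrepeat⟩ := Set.finite_univ.exists_lt_map_eq_of_forall_mem
    (f := secondLetterChain φ a₀) fun _ => Set.mem_univ _
  obtain ⟨n, rfl⟩ : ∃ n, v = u + n + 1 := ⟨v - u - 1, by omega⟩
  obtain ⟨x, y, hxy, hx, hy⟩ := exists_iterWord_secondLetterChain hK hφ a₀ u n
  obtain ⟨c, w₂, rfl⟩ : ∃ c w₂, y = c :: w₂ := List.exists_cons_of_length_pos (by omega)
  refine ⟨_, c, n + 1, x, w₂, by omega, hx, ?_, by simpa [← hrepeat] using hxy⟩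
  exact List.ne_nil_of_length_pos (by simp at hy; omega)

end InteriorReturn

theorem stmt0_general {A : Type} [Fintype A] (γ : A → List A) (k : ℕ) (hk : 2 ≤ k)
    (hu : Uniform k γ) (a₀ : A) :
    ∃ (b c : A) (m : ℕ) (w₁ w₂ : List A), 1 ≤ m ∧ w₁ ≠ [] ∧ w₂ ≠ [] ∧
      iterWord γ m [b] = w₁ ++ [b, c] ++ w₂ ∧
      [b, c] <:+: iterWord γ m [b, c] := by
  obtain ⟨b, c, n, w₁, w₂, hn, hw₁, hw₂, hb⟩ := exists_iterWord_eq_append_pair_append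
    (by nlinarith : 4 ≤ k ^ 2) (uniform_iterWord_singleton hu 2) a₀
  rw [iterWord_iterWord_singleton] at hb
  refine ⟨b, c, 2 * n, w₁, w₂, by omega, hw₁, hw₂, hb, w₁, w₂ ++ iterWord γ (2 * n) [c], ?_⟩
  rw [← List.singleton_append, iterWord_append, hb]
  simp

theorem stmt0 {A : Type} [Fintype A] (γ : A → List A) (k : ℕ) (hk : 2 ≤ k)
    (hu : Uniform k γ) (a₀ : A) (s : ℕ → A) (hs : IsIterFix γ a₀ s)
    (hnp : ¬ UltimatelyPeriodic s) :
    ∃ (b c : A) (m : ℕ) (w₁ w₂ : List A), 1 ≤ m ∧ w₁ ≠ [] ∧ w₂ ≠ [] ∧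
      iterWord γ m [b] = w₁ ++ [b, c] ++ w₂ ∧
      [b, c] <:+: iterWord γ m [b, c] :=
  stmt0_general γ k hk hu a₀
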